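/- Let H be a real inner product space and let γ_1, ..., γ_k be square-integrable H-valued random vectors on a common probability space such that E[⟨γ_j, γ_s⟩] = E[‖γ_j‖^2] for all 1 ≤ j ≤ s ≤ k, and E[‖γ_j‖^2] ≤ A + jB for all j, where A, B ≥ 0 are constants. Then for every α ∈ (0,1], with β := 1−α, one has E[ ‖ ∑_{j=1}^k α β^{k−j} γ_j ‖^2 ] ≤ 2A + 2kB. -/

import Mathlib

open MeasureTheory Finset
open scoped InnerProductSpace BigOperators

lemma my_integrable_inner
    {H : Type*} [NormedAddCommGroup H] [InnerProductSpace ℝ H]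
    {Ω : Type*} [MeasurableSpace Ω] {μ : Measure Ω}
    {f g : Ω → H} (hf : MemLp f 2 μ) (hg : MemLp g 2 μ) :
    Integrable (fun w => ⟪f w, g w⟫_ℝ) μ := by
  have h := L2.integrable_inner (𝕜 := ℝ) (hf.toLp f) (hg.toLp g)
  refine h.congr ?_
  filter_upwards [hf.coeFn_toLp, hg.coeFn_toLp] with w h1 h2
  rw [h1, h2]

/-- **Abstract momentum-error lemma.** If square-integrable random vectors `γ_1, …, γ_k` in a
real inner product space satisfy `E⟪γ_j, γ_s⟫ = E‖γ_j‖²` for `1 ≤ j ≤ s ≤ k` and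
`E‖γ_j‖² ≤ A + jB`, then for every `α ∈ (0,1]`, with `β = 1 - α`,
`E‖∑_{j=1}^k α β^{k-j} γ_j‖² ≤ 2A + 2kB`. -/
theorem momentum_error_abstract
    {H : Type*} [NormedAddCommGroup H] [InnerProductSpace ℝ H]
    {Ω : Type*} [MeasurableSpace Ω] (μ : Measure Ω) [IsProbabilityMeasure μ]
    (k : ℕ) (γ : ℕ → Ω → H)
    (hγ : ∀ j, MemLp (γ j) 2 μ)
    (A B : ℝ) (hA : 0 ≤ A) (hB : 0 ≤ B)
    (hcross : ∀ j s : ℕ, 1 ≤ j → j ≤ s → s ≤ k →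
      ∫ w, ⟪γ j w, γ s w⟫_ℝ ∂μ = ∫ w, ‖γ j w‖ ^ 2 ∂μ)
    (hbound : ∀ j : ℕ, 1 ≤ j → j ≤ k → ∫ w, ‖γ j w‖ ^ 2 ∂μ ≤ A + (j : ℝ) * B)
    (α : ℝ) (hα0 : 0 < α) (hα1 : α ≤ 1) :
    ∫ w, ‖∑ j ∈ Finset.Icc 1 k, (α * (1 - α) ^ (k - j)) • γ j w‖ ^ 2 ∂μ ≤
      2 * A + 2 * (k : ℝ) * B := by
  set β : ℝ := 1 - α with hβ
  have hβ0 : 0 ≤ β := by simp [hβ]; linarith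
  set c : ℕ → ℝ := fun j => α * β ^ (k - j) with hc
  have hc0 : ∀ j, 0 ≤ c j := fun j => mul_nonneg hα0.le (pow_nonneg hβ0 _)
  -- sum of coefficients is at most 1
  have hsum : ∑ j ∈ Finset.Icc 1 k, c j ≤ 1 := by
    have hre : ∑ j ∈ Finset.Icc 1 k, c j = ∑ i ∈ Finset.range k, α * β ^ i := by
      refine Finset.sum_nbij' (fun j => k - j) (fun i => k - i) ?_ ?_ ?_ ?_ ?_
      · intro a ha; simp only [Finset.mem_Icc] at ha; simp; omega
      · intro a ha; simp only [Finset.mem_range] at ha; simp [Finset.mem_Icc]; omega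
      · intro a ha; simp only [Finset.mem_Icc] at ha; omega
      · intro a ha; simp only [Finset.mem_range] at ha; omega
      · intro a ha; simp only [Finset.mem_Icc] at ha; simp [hc]
    rw [hre, ← Finset.mul_sum]
    have hgeom : (1 - β) * ∑ i ∈ Finset.range k, β ^ i = 1 - β ^ k := by
      have := geom_sum_mul β k
      nlinarith [this]
    have hβk : 0 ≤ β ^ k := pow_nonneg hβ0 _
    have : α = 1 - β := by simp [hβ]
    nlinarith [hgeom]
  -- pointwise expansion
  have hpt : ∀ w, ‖∑ j ∈ Finset.Icc 1 k, c j • γ j w‖ ^ 2 =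
      ∑ j ∈ Finset.Icc 1 k, ∑ s ∈ Finset.Icc 1 k, (c j * c s) * ⟪γ j w, γ s w⟫_ℝ := by
    intro w
    rw [← real_inner_self_eq_norm_sq]
    simp_rw [sum_inner, inner_sum, real_inner_smul_left, real_inner_smul_right]
    exact Finset.sum_congr rfl fun j _ => Finset.sum_congr rfl fun s _ => by ring
  have hint : ∀ j s : ℕ, Integrable (fun w => (c j * c s) * ⟪γ j w, γ s w⟫_ℝ) μ :=
    fun j s => (my_integrable_inner (hγ j) (hγ s)).const_mul _
  have hswap : ∫ w, ‖∑ j ∈ Finset.Icc 1 k, c j • γ j w‖ ^ 2 ∂μ =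
      ∑ j ∈ Finset.Icc 1 k, ∑ s ∈ Finset.Icc 1 k, (c j * c s) * ∫ w, ⟪γ j w, γ s w⟫_ℝ ∂μ := by
    simp_rw [hpt]
    rw [integral_finset_sum _ (fun j _ => integrable_finset_sum _ (fun s _ => hint j s))]
    refine Finset.sum_congr rfl fun j _ => ?_
    rw [integral_finset_sum _ (fun s _ => hint j s)]
    exact Finset.sum_congr rfl fun s _ => integral_const_mul _ _
  -- each integral is bounded by A + kB
  have hIbd : ∀ j s : ℕ, j ∈ Finset.Icc 1 k → s ∈ Finset.Icc 1 k →
      ∫ w, ⟪γ j w, γ s w⟫_ℝ ∂μ ≤ A + (k : ℝ) * B := by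
    intro j s hj hs
    simp only [Finset.mem_Icc] at hj hs
    rcases le_total j s with h | h
    · calc ∫ w, ⟪γ j w, γ s w⟫_ℝ ∂μ = ∫ w, ‖γ j w‖ ^ 2 ∂μ :=
            hcross j s hj.1 h hs.2
        _ ≤ A + (j : ℝ) * B := hbound j hj.1 hj.2
        _ ≤ A + (k : ℝ) * B := by
            have : (j : ℝ) ≤ k := Nat.cast_le.mpr hj.2
            nlinarith
    · have heq : ∀ w, ⟪γ j w, γ s w⟫_ℝ = ⟪γ s w, γ j w⟫_ℝ := fun w => real_inner_comm _ _
      calc ∫ w, ⟪γ j w, γ s w⟫_ℝ ∂μ = ∫ w, ⟪γ s w, γ j w⟫_ℝ ∂μ := by simp_rw [heq]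
        _ = ∫ w, ‖γ s w‖ ^ 2 ∂μ := hcross s j hs.1 h hj.2
        _ ≤ A + (s : ℝ) * B := hbound s hs.1 hs.2
        _ ≤ A + (k : ℝ) * B := by
            have : (s : ℝ) ≤ k := Nat.cast_le.mpr hs.2
            nlinarith
  have hAkB : 0 ≤ A + (k : ℝ) * B := by positivity
  calc ∫ w, ‖∑ j ∈ Finset.Icc 1 k, c j • γ j w‖ ^ 2 ∂μ
      = ∑ j ∈ Finset.Icc 1 k, ∑ s ∈ Finset.Icc 1 k,
          (c j * c s) * ∫ w, ⟪γ j w, γ s w⟫_ℝ ∂μ := hswap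
    _ ≤ ∑ j ∈ Finset.Icc 1 k, ∑ s ∈ Finset.Icc 1 k, (c j * c s) * (A + (k : ℝ) * B) := by
        refine Finset.sum_le_sum fun j hj => Finset.sum_le_sum fun s hs => ?_
        exact mul_le_mul_of_nonneg_left (hIbd j s hj hs)
          (mul_nonneg (hc0 j) (hc0 s))
    _ = (∑ j ∈ Finset.Icc 1 k, c j) * (∑ s ∈ Finset.Icc 1 k, c s) * (A + (k : ℝ) * B) := by
        rw [Finset.sum_mul_sum, Finset.sum_mul]
        exact Finset.sum_congr rfl fun j _ => (Finset.sum_mul _ _ _).symm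
    _ ≤ 2 * A + 2 * (k : ℝ) * B := by
        have h0 : 0 ≤ ∑ j ∈ Finset.Icc 1 k, c j :=
          Finset.sum_nonneg fun j _ => hc0 j
        nlinarith [mul_nonneg h0 h0, mul_le_one₀ hsum h0 hsum]
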